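/- arXiv:1404.4109 — 6 statements merged into one kernel-verified Lean document; each statement's English description precedes it below -/
import Mathlib

section
/- Let V be a real vector space and f : V → ℝ. If there exists ε > 0 such that |f(x+y) − f(x)·f(y)| ≤ ε for all x, y ∈ V, then either f is bounded on V, or f(x+y) = f(x)·f(y) for all x, y ∈ V. -/
theorem stmt_0 (V : Type*) [AddCommGroup V] [Module ℝ V] (f : V → ℝ)
    (ε : ℝ) (hε : 0 < ε) (h : ∀ x y : V, |f (x + y) - f x * f y| ≤ ε) :
    (∃ M : ℝ, ∀ x : V, |f x| ≤ M) ∨ (∀ x y : V, f (x + y) = f x * f y) := by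
  by_cases hb : ∃ M : ℝ, ∀ x : V, |f x| ≤ M
  · exact Or.inl hb
  · right
    push_neg at hb
    intro x y
    have key : ∀ δ : ℝ, 0 < δ → |f (x + y) - f x * f y| ≤ δ := by
      intro δ hδ
      set C : ℝ := 2 * ε + |f x| * ε with hC
      have hC0 : 0 < C := by positivity
      obtain ⟨z, hz⟩ := hb (max 0 (C / δ))
      have hz0 : 0 < |f z| := lt_of_le_of_lt (le_max_left _ _) hz
      have hzC : C / δ < |f z| := lt_of_le_of_lt (le_max_right _ _) hz
      have h1 : |f (x + y + z) - f (x + y) * f z| ≤ ε := h (x + y) z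
      have h2 : |f (x + y + z) - f x * f (y + z)| ≤ ε := by
        have := h x (y + z); rwa [← add_assoc] at this
      have h3 : |f (y + z) - f y * f z| ≤ ε := h y z
      have h3' : |f x * f (y + z) - f x * (f y * f z)| ≤ |f x| * ε := by
        rw [← mul_sub, abs_mul]
        exact mul_le_mul_of_nonneg_left h3 (abs_nonneg _)
      have main : |f (x + y) * f z - f x * f y * f z| ≤ C := by
        calc |f (x + y) * f z - f x * f y * f z|
            ≤ |f (x + y) * f z - f (x + y + z)| + |f (x + y + z) - f x * f y * f z| :=
              abs_sub_le _ _ _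
          _ ≤ ε + (|f (x + y + z) - f x * f (y + z)| + |f x * f (y + z) - f x * f y * f z|) := by
              gcongr
              · rw [abs_sub_comm]; exact h1
              · exact abs_sub_le _ _ _
          _ ≤ ε + (ε + |f x| * ε) := by
              gcongr
              calc |f x * f (y + z) - f x * f y * f z|
                  = |f x * f (y + z) - f x * (f y * f z)| := by ring_nf
                _ ≤ |f x| * ε := h3'
          _ = C := by rw [hC]; ring
      have main' : |f (x + y) - f x * f y| * |f z| ≤ C := by
        rw [← abs_mul, sub_mul]; exact main
      by_contra hcon
      push_neg at hcon
      have : C / δ * δ < |f z| * |f (x + y) - f x * f y| := by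
        apply mul_lt_mul' (le_of_lt hzC) hcon (le_of_lt hδ) hz0
      rw [div_mul_cancel₀ _ (ne_of_gt hδ), mul_comm] at this
      linarith
    have h0 : |f (x + y) - f x * f y| ≤ 0 := by
      by_contra hcc
      push_neg at hcc
      linarith [key (|f (x + y) - f x * f y| / 2) (by linarith)]
    have := abs_nonpos_iff.mp h0
    linarith [sub_eq_zero.mp this]
end

section
/- Let G be a group (written multiplicatively) and f : G → ℂ. If there exists ε > 0 such that |f(x*y) − f(x)·f(y)| ≤ ε for all x, y ∈ G, then either f is bounded, or f is a homomorphism into the multiplicative monoid of ℂ, i.e. f(x*y) = f(x)·f(y) for all x, y. -/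
/-! If `f` is unbounded, multiply the defect `f (x * y) - f x * f y` by `f z`: associativity
rewrites the product as a combination of three defects, so `‖defect‖ * ‖f z‖` stays bounded
while `‖f z‖` does not, forcing the defect to vanish. -/

section CauchyDefect

variable {G R : Type*} [Semigroup G] [NormedRing R] [NormMulClass R]

theorem norm_map_mul_sub_mul_mul_norm_le {f : G → R} {ε : ℝ}
    (h : ∀ x y, ‖f (x * y) - f x * f y‖ ≤ ε) (x y z : G) :
    ‖f (x * y) - f x * f y‖ * ‖f z‖ ≤ (2 + ‖f x‖) * ε := by
  have hdecomp : (f (x * y) - f x * f y) * f z =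
      (f (x * (y * z)) - f x * f (y * z)) - (f (x * y * z) - f (x * y) * f z)
        + f x * (f (y * z) - f y * f z) := by
    rw [mul_assoc]; noncomm_ring
  calc ‖f (x * y) - f x * f y‖ * ‖f z‖
      = ‖(f (x * y) - f x * f y) * f z‖ := (norm_mul _ _).symm
    _ ≤ ‖f (x * (y * z)) - f x * f (y * z)‖ + ‖f (x * y * z) - f (x * y) * f z‖
          + ‖f x‖ * ‖f (y * z) - f y * f z‖ := by
        rw [hdecomp, ← norm_mul]
        exact (norm_add_le _ _).trans (add_le_add_left (norm_sub_le _ _) _)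
    _ ≤ ε + ε + ‖f x‖ * ε := by gcongr <;> apply h
    _ = (2 + ‖f x‖) * ε := by ring

theorem map_mul_of_not_bounded {f : G → R} {ε : ℝ}
    (h : ∀ x y, ‖f (x * y) - f x * f y‖ ≤ ε) (hf : ¬ ∃ M : ℝ, ∀ x, ‖f x‖ ≤ M) (x y : G) :
    f (x * y) = f x * f y := by
  rw [← sub_eq_zero, ← norm_le_zero_iff]
  by_contra! hpos
  push Not at hf
  obtain ⟨z, hz⟩ := hf ((2 + ‖f x‖) * ε / ‖f (x * y) - f x * f y‖)
  rw [div_lt_iff₀ hpos, mul_comm ‖f z‖] at hz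
  exact (norm_map_mul_sub_mul_mul_norm_le h x y z).not_gt hz

end CauchyDefect

theorem stmt_1_general (G : Type*) [Group G] (f : G → ℂ)
    (ε : ℝ) (h : ∀ x y : G, ‖f (x * y) - f x * f y‖ ≤ ε) :
    (∃ M : ℝ, ∀ x : G, ‖f x‖ ≤ M) ∨ (∀ x y : G, f (x * y) = f x * f y) :=
  or_iff_not_imp_left.2 (map_mul_of_not_bounded h)

theorem stmt_1 (G : Type*) [Group G] (f : G → ℂ)
    (ε : ℝ) (hε : 0 < ε) (h : ∀ x y : G, ‖f (x * y) - f x * f y‖ ≤ ε) :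
    (∃ M : ℝ, ∀ x : G, ‖f x‖ ≤ M) ∨ (∀ x y : G, f (x * y) = f x * f y) :=
  stmt_1_general G f ε h
end

section
/- Let G be a group and σ : G → G an involutive anti-automorphism (σ(x*y) = σ(y)*σ(x) and σ(σ(x)) = x for all x, y). Let δ > 0 and f : G → ℂ satisfy |f(x*y) + f(x*σ(y)) − 2·f(x)·f(y)| ≤ δ for all x, y ∈ G. Then either |f(x)| ≤ (1 + √(1+2δ))/2 for all x ∈ G, or f(x*y) + f(x*σ(y)) = 2·f(x)·f(y) for all x, y ∈ G. -/
/-! If `‖f x₀‖` exceeds `(1 + √(1 + 2δ))/2`, the positive root of `t² - t = δ/2`, then the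
defect at `(x₀, x₀)` produces a point where `‖f‖` has grown by a fixed amount, and iterating
shows that `f` is unbounded. For unbounded `f`, multiplying a defect by `f a` and expanding with
the approximate equation writes it as a combination of defects whose coefficients do not depend
on `a`; this stays bounded as `‖f a‖ → ∞`, so the defect vanishes. The same argument applied to
`f ∘ σ - f` first shows `f ∘ σ = f`, which the expansion needs. -/

open Set Asymptotics

theorem not_bddAbove_range_of_sq_sub_le {α : Type*} (g : α → ℝ) (δ : ℝ)
    (hg : ∀ x, ∃ z, g x ^ 2 - δ / 2 ≤ g z) {x₀ : α} (hx₀ : (1 + √(1 + 2 * δ)) / 2 < g x₀) :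
    ¬ BddAbove (range g) := by
  set c := g x₀
  set ε := c ^ 2 - c - δ / 2 with hε_def
  have hc : 1 / 2 < c := by linarith [Real.sqrt_nonneg (1 + 2 * δ)]
  have hε : 0 < ε := by
    have := (Real.sqrt_lt' (by linarith)).1 (show √(1 + 2 * δ) < 2 * c - 1 by linarith)
    nlinarith
  -- `t ↦ t ^ 2 - t` is increasing on `[1/2, ∞)`
  have hstep : ∀ x, c ≤ g x → ∃ z, g x + ε ≤ g z := fun x hx ↦ by
    obtain ⟨z, hz⟩ := hg x
    exact ⟨z, by nlinarith [mul_nonneg (sub_nonneg.2 hx) (by linarith : 0 ≤ g x + c - 1)]⟩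
  have hgrow : ∀ n : ℕ, ∃ x, c + n * ε ≤ g x := by
    intro n
    induction n with
    | zero => exact ⟨x₀, by simp [c]⟩
    | succ n ih =>
      obtain ⟨x, hx⟩ := ih
      obtain ⟨z, hz⟩ := hstep x (by nlinarith [n.cast_nonneg (α := ℝ)])
      exact ⟨z, by push_cast; linarith⟩
  rintro ⟨M, hM⟩
  obtain ⟨n, hn⟩ := exists_nat_gt ((M - c) / ε)
  obtain ⟨x, hx⟩ := hgrow n
  have := hM (mem_range_self x)
  rw [div_lt_iff₀ hε] at hn
  linarith

def dAlembertDefect {G R : Type*} [Mul G] [CommRing R] (σ : G → G) (f : G → R) (x y : G) : R :=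
  f (x * y) + f (x * σ y) - 2 * f x * f y

section Mul

variable {G : Type*} [Mul G] {σ : G → G} {f : G → ℂ} {δ : ℝ}

theorem dAlembertDefect_isBigO_one {α : Type*} {l : Filter α}
    (h : ∀ x y, ‖dAlembertDefect σ f x y‖ ≤ δ) (u v : α → G) :
    (fun a ↦ dAlembertDefect σ f (u a) (v a)) =O[l] fun _ ↦ (1 : ℂ) :=
  .of_bound δ (.of_forall fun a ↦ by simpa using h (u a) (v a))

theorem exists_norm_sq_sub_le (h : ∀ x y, ‖dAlembertDefect σ f x y‖ ≤ δ) (x : G) :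
    ∃ z, ‖f x‖ ^ 2 - δ / 2 ≤ ‖f z‖ := by
  have hxx : 2 * ‖f x‖ ^ 2 ≤ ‖f (x * x)‖ + ‖f (x * σ x)‖ + δ :=
    calc 2 * ‖f x‖ ^ 2 = ‖2 * f x * f x‖ := by simp [sq]; ring
      _ = ‖(f (x * x) + f (x * σ x)) - dAlembertDefect σ f x x‖ := by
        rw [dAlembertDefect, sub_sub_cancel]
      _ ≤ ‖f (x * x) + f (x * σ x)‖ + ‖dAlembertDefect σ f x x‖ := norm_sub_le _ _
      _ ≤ ‖f (x * x)‖ + ‖f (x * σ x)‖ + δ := add_le_add (norm_add_le _ _) (h x x)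
  rcases le_total ‖f (x * x)‖ ‖f (x * σ x)‖ with hle | hle
  · exact ⟨x * σ x, by linarith⟩
  · exact ⟨x * x, by linarith⟩

theorem not_isBigO_one_of_lt_norm (h : ∀ x y, ‖dAlembertDefect σ f x y‖ ≤ δ) {x₀ : G}
    (hx₀ : (1 + √(1 + 2 * δ)) / 2 < ‖f x₀‖) : ¬ f =O[⊤] fun _ ↦ (1 : ℂ) := by
  intro hbdd
  obtain ⟨C, hC⟩ := isBigO_top.1 hbdd
  refine not_bddAbove_range_of_sq_sub_le (‖f ·‖) δ (exists_norm_sq_sub_le h) hx₀ ⟨C, ?_⟩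
  rintro _ ⟨x, rfl⟩
  simpa using hC x

theorem apply_eq_of_not_isBigO_one (hinv : ∀ x, σ (σ x) = x)
    (h : ∀ x y, ‖dAlembertDefect σ f x y‖ ≤ δ) (hf : ¬ f =O[⊤] fun _ ↦ (1 : ℂ)) (y : G) :
    f (σ y) = f y := by
  by_contra hne
  have hσy : (fun a ↦ 2 * (f (σ y) - f y) * f a) =O[⊤] fun _ ↦ (1 : ℂ) := by
    refine ((dAlembertDefect_isBigO_one h id fun _ ↦ y).sub
      (dAlembertDefect_isBigO_one h id fun _ ↦ σ y)).congr_left fun a ↦ ?_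
    simp only [dAlembertDefect, hinv, id]
    ring
  exact hf ((isBigO_const_mul_left_iff (by simpa [sub_eq_zero] using hne)).1 hσy)

end Mul

theorem dAlembertDefect_mul_eq {G R : Type*} [Semigroup G] [CommRing R] {σ : G → G}
    (hanti : ∀ x y, σ (x * y) = σ y * σ x) (hinv : ∀ x, σ (σ x) = x) {f : G → R}
    (hf : ∀ x, f (σ x) = f x) (x y a : G) :
    dAlembertDefect σ f x y * (2 * f a) =
      2 * f x * (dAlembertDefect σ f y a + dAlembertDefect σ f (σ y) a)
        + (dAlembertDefect σ f x (y * a) + dAlembertDefect σ f x (y * σ a)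
          + dAlembertDefect σ f x (σ y * a) + dAlembertDefect σ f x (σ y * σ a))
        - 2 * f y * dAlembertDefect σ f x a - dAlembertDefect σ f (x * σ a) y
        - dAlembertDefect σ f (x * a) y - dAlembertDefect σ f (x * y) a
        - dAlembertDefect σ f (x * σ y) a := by
  simp only [dAlembertDefect, hanti, hinv, hf, mul_assoc]
  ring

theorem dAlembertDefect_eq_zero_of_not_isBigO_one {G : Type*} [Semigroup G] {σ : G → G}
    (hanti : ∀ x y, σ (x * y) = σ y * σ x) (hinv : ∀ x, σ (σ x) = x) {f : G → ℂ} {δ : ℝ}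
    (h : ∀ x y, ‖dAlembertDefect σ f x y‖ ≤ δ) (hf : ¬ f =O[⊤] fun _ ↦ (1 : ℂ)) (x y : G) :
    dAlembertDefect σ f x y = 0 := by
  have hD := dAlembertDefect_isBigO_one (l := (⊤ : Filter G)) h
  have hE : (fun a ↦ dAlembertDefect σ f x y * (2 * f a)) =O[⊤] fun _ ↦ (1 : ℂ) :=
    ((((((((hD (fun _ ↦ y) id).add (hD (fun _ ↦ σ y) id)).const_mul_left (2 * f x)).add
      ((((hD (fun _ ↦ x) (y * ·)).add (hD (fun _ ↦ x) (y * σ ·))).add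
        (hD (fun _ ↦ x) (σ y * ·))).add (hD (fun _ ↦ x) (σ y * σ ·)))).sub
      ((hD (fun _ ↦ x) id).const_mul_left (2 * f y))).sub (hD (x * σ ·) fun _ ↦ y)).sub
      (hD (x * ·) fun _ ↦ y)).sub (hD (fun _ ↦ x * y) id)).sub (hD (fun _ ↦ x * σ y) id)
    |>.congr_left fun a ↦
      (dAlembertDefect_mul_eq hanti hinv (apply_eq_of_not_isBigO_one hinv h hf) x y a).symm
  by_contra hne
  exact hf ((isBigO_const_mul_left_iff two_ne_zero).1 ((isBigO_const_mul_left_iff hne).1 hE))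

theorem stmt_2_general (G : Type*) [Group G] (σ : G → G)
    (hanti : ∀ x y : G, σ (x * y) = σ y * σ x) (hinv : ∀ x : G, σ (σ x) = x)
    (δ : ℝ) (f : G → ℂ)
    (h : ∀ x y : G, ‖f (x * y) + f (x * σ y) - 2 * f x * f y‖ ≤ δ) :
    (∀ x : G, ‖f x‖ ≤ (1 + Real.sqrt (1 + 2 * δ)) / 2) ∨
    (∀ x y : G, f (x * y) + f (x * σ y) = 2 * f x * f y) := by
  refine or_iff_not_imp_left.2 fun hsmall x y ↦ ?_
  push Not at hsmall
  obtain ⟨x₀, hx₀⟩ := hsmall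
  have hf := not_isBigO_one_of_lt_norm h hx₀
  exact sub_eq_zero.1 (dAlembertDefect_eq_zero_of_not_isBigO_one hanti hinv h hf x y)

theorem stmt_2 (G : Type*) [Group G] (σ : G → G)
    (hanti : ∀ x y : G, σ (x * y) = σ y * σ x) (hinv : ∀ x : G, σ (σ x) = x)
    (δ : ℝ) (hδ : 0 < δ) (f : G → ℂ)
    (h : ∀ x y : G, ‖f (x * y) + f (x * σ y) - 2 * f x * f y‖ ≤ δ) :
    (∀ x : G, ‖f x‖ ≤ (1 + Real.sqrt (1 + 2 * δ)) / 2) ∨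
    (∀ x y : G, f (x * y) + f (x * σ y) = 2 * f x * f y) :=
  stmt_2_general G σ hanti hinv δ f h
end

section
/- Let G be a group, δ > 0, and f : G → ℂ satisfy |f(x*y) − f(x)·f(y)| ≤ δ for all x, y ∈ G. If f is bounded, then |f(x)| ≤ (1 + √(1+4δ))/2 for all x ∈ G. -/
/-! With `M = ⨆ x, ‖f x‖`, the defect bound at `(x, x)` gives
`‖f x‖² ≤ ‖f (x * x)‖ + δ ≤ M + δ` for every `x`, hence `M² ≤ M + δ`, and `M` lies below the
larger root of `t² - t - δ`. -/

theorem norm_sq_le_norm_add_of_norm_sub_mul_self_le {α : Type*} [NormedDivisionRing α]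
    {a b : α} {δ : ℝ} (h : ‖b - a * a‖ ≤ δ) : ‖a‖ ^ 2 ≤ ‖b‖ + δ := by
  have := norm_sub_norm_le (a * a) b
  rw [norm_sub_rev, norm_mul, ← sq] at this
  linarith

theorem sq_ciSup_le {ι : Sort*} [Nonempty ι] {g : ι → ℝ} {c : ℝ} (hg : ∀ i, 0 ≤ g i)
    (hc : ∀ i, g i ^ 2 ≤ c) : (⨆ i, g i) ^ 2 ≤ c :=
  (Real.le_sqrt (Real.iSup_nonneg hg) ((sq_nonneg _).trans (hc (Classical.arbitrary ι)))).mp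
    (ciSup_le fun i => Real.le_sqrt_of_sq_le (hc i))

theorem le_one_add_sqrt_div_two_of_sq_le_add {M δ : ℝ} (h : M ^ 2 ≤ M + δ) :
    M ≤ (1 + Real.sqrt (1 + 4 * δ)) / 2 := by
  have : 2 * M - 1 ≤ Real.sqrt (1 + 4 * δ) := Real.le_sqrt_of_sq_le (by nlinarith)
  linarith

theorem stmt_9_general (G : Type*) [Group G] (δ : ℝ) (f : G → ℂ)
    (h : ∀ x y : G, ‖f (x * y) - f x * f y‖ ≤ δ)
    (hf : ∃ M : ℝ, ∀ x : G, ‖f x‖ ≤ M) :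
    ∀ x : G, ‖f x‖ ≤ (1 + Real.sqrt (1 + 4 * δ)) / 2 := by
  obtain ⟨B, hB⟩ := hf
  have hle : ∀ x, ‖f x‖ ≤ ⨆ y, ‖f y‖ := le_ciSup ⟨B, by rintro _ ⟨x, rfl⟩; exact hB x⟩
  have hsup : (⨆ y, ‖f y‖) ^ 2 ≤ (⨆ y, ‖f y‖) + δ :=
    sq_ciSup_le (fun _ => norm_nonneg _) fun x =>
      (norm_sq_le_norm_add_of_norm_sub_mul_self_le (h x x)).trans (by linarith [hle (x * x)])
  exact fun x => (hle x).trans (le_one_add_sqrt_div_two_of_sq_le_add hsup)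

theorem stmt_9 (G : Type*) [Group G] (δ : ℝ) (hδ : 0 < δ) (f : G → ℂ)
    (h : ∀ x y : G, ‖f (x * y) - f x * f y‖ ≤ δ)
    (hf : ∃ M : ℝ, ∀ x : G, ‖f x‖ ≤ M) :
    ∀ x : G, ‖f x‖ ≤ (1 + Real.sqrt (1 + 4 * δ)) / 2 :=
  stmt_9_general G δ f h hf
end

section
/- Let G be a group, δ > 0, and f, g : G → ℂ with |f(x*y) − f(x)·g(y)| ≤ δ for all x, y ∈ G. If g is unbounded and f ≠ 0, then f(x*y) = f(x)·g(y) for all x, y ∈ G. -/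
/-!
Combining the inequality at `(x * y, z)` and at `(x, y * z)` gives
`f (x * y) * g z ≈ f x * g (y * z)` up to `2 δ`. Multiplying by suitable values of `f` turns each
of the two identities below into `a * g z = O(1)` for a constant `a`, and since `g` is unbounded
this forces `a = 0`: first `f (x * y) * f x₀ = f x * f (x₀ * y)`, then `f (x₀ * y) = g y * f x₀`.
Choosing `f x₀ ≠ 0` and cancelling it gives `f (x * y) = f x * g y`.
-/

theorem eq_zero_of_forall_norm_mul_le {ι 𝕜 : Type*} [NormedDivisionRing 𝕜] {g : ι → 𝕜}
    (hg : ∀ M : ℝ, ∃ z, M < ‖g z‖) {a : 𝕜} {C : ℝ} (hC : ∀ z, ‖a * g z‖ ≤ C) : a = 0 := by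
  by_contra ha
  have ha' : 0 < ‖a‖ := norm_pos_iff.mpr ha
  obtain ⟨z, hz⟩ := hg (C / ‖a‖)
  have := hC z
  rw [norm_mul] at this
  rw [div_lt_iff₀ ha'] at hz
  linarith

section StabilityOfMultiplicative

variable {G 𝕜 : Type*} [Semigroup G] [NormedField 𝕜] {f g : G → 𝕜} {δ : ℝ}

theorem norm_mul_sub_mul_le_two_mul (h : ∀ x y, ‖f (x * y) - f x * g y‖ ≤ δ) (x y z : G) :
    ‖f (x * y) * g z - f x * g (y * z)‖ ≤ 2 * δ := by
  calc ‖f (x * y) * g z - f x * g (y * z)‖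
      = ‖(f (x * (y * z)) - f x * g (y * z)) - (f (x * y * z) - f (x * y) * g z)‖ := by
        rw [mul_assoc]; ring_nf
    _ ≤ ‖f (x * (y * z)) - f x * g (y * z)‖ + ‖f (x * y * z) - f (x * y) * g z‖ :=
        norm_sub_le _ _
    _ ≤ 2 * δ := by linarith [h x (y * z), h (x * y) z]

theorem mul_apply_eq_apply_mul_apply (h : ∀ x y, ‖f (x * y) - f x * g y‖ ≤ δ)
    (hg : ∀ M : ℝ, ∃ z, M < ‖g z‖) (x y x₀ : G) :
    f (x * y) * f x₀ = f x * f (x₀ * y) := by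
  rw [← sub_eq_zero]
  refine eq_zero_of_forall_norm_mul_le hg (C := ‖f x₀‖ * (2 * δ) + ‖f x‖ * (2 * δ)) fun z => ?_
  have hδ := norm_mul_sub_mul_le_two_mul h
  calc ‖(f (x * y) * f x₀ - f x * f (x₀ * y)) * g z‖
      = ‖f x₀ * (f (x * y) * g z - f x * g (y * z))
          - f x * (f (x₀ * y) * g z - f x₀ * g (y * z))‖ := by ring_nf
    _ ≤ ‖f x₀‖ * ‖f (x * y) * g z - f x * g (y * z)‖
          + ‖f x‖ * ‖f (x₀ * y) * g z - f x₀ * g (y * z)‖ := by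
        rw [← norm_mul, ← norm_mul]; exact norm_sub_le _ _
    _ ≤ ‖f x₀‖ * (2 * δ) + ‖f x‖ * (2 * δ) := by
        gcongr
        exacts [hδ x y z, hδ x₀ y z]

theorem apply_mul_eq_mul_apply (h : ∀ x y, ‖f (x * y) - f x * g y‖ ≤ δ)
    (hg : ∀ M : ℝ, ∃ z, M < ‖g z‖) {x₀ : G} (hx₀ : f x₀ ≠ 0) (y : G) :
    f (x₀ * y) = g y * f x₀ := by
  set B := f (x₀ * y) - g y * f x₀
  have hB : ∀ x, f x * B = f x₀ * (f (x * y) - f x * g y) := fun x => by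
    linear_combination -mul_apply_eq_apply_mul_apply h hg x y x₀
  suffices B * f x₀ = 0 from sub_eq_zero.mp ((mul_eq_zero.mp this).resolve_right hx₀)
  refine eq_zero_of_forall_norm_mul_le hg (C := ‖f x₀‖ * δ + δ * ‖B‖) fun z => ?_
  -- Evaluate `hB` at `x = x₀ * z`, where `f (x₀ * z) ≈ f x₀ * g z`.
  calc ‖B * f x₀ * g z‖
      = ‖f (x₀ * z) * B - (f (x₀ * z) - f x₀ * g z) * B‖ := by ring_nf
    _ ≤ ‖f x₀‖ * ‖f (x₀ * z * y) - f (x₀ * z) * g y‖ + ‖f (x₀ * z) - f x₀ * g z‖ * ‖B‖ := by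
        rw [hB, ← norm_mul, ← norm_mul]; exact norm_sub_le _ _
    _ ≤ ‖f x₀‖ * δ + δ * ‖B‖ := by
        gcongr
        exacts [h _ _, h _ _]

end StabilityOfMultiplicative

theorem stmt_12_general (G : Type*) [Group G] (δ : ℝ) (f g : G → ℂ)
    (h : ∀ x y : G, ‖f (x * y) - f x * g y‖ ≤ δ)
    (hg : ∀ M : ℝ, ∃ z : G, M < ‖g z‖) (hf : f ≠ 0) :
    ∀ x y : G, f (x * y) = f x * g y := by
  obtain ⟨x₀, hx₀⟩ : ∃ x₀, f x₀ ≠ 0 := Function.ne_iff.mp hf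
  intro x y
  apply mul_right_cancel₀ hx₀
  rw [mul_apply_eq_apply_mul_apply h hg x y x₀, apply_mul_eq_mul_apply h hg hx₀ y]
  ring

theorem stmt_12 (G : Type*) [Group G] (δ : ℝ) (hδ : 0 < δ) (f g : G → ℂ)
    (h : ∀ x y : G, ‖f (x * y) - f x * g y‖ ≤ δ)
    (hg : ∀ M : ℝ, ∃ z : G, M < ‖g z‖) (hf : f ≠ 0) :
    ∀ x y : G, f (x * y) = f x * g y :=
  stmt_12_general G δ f g h hg hf
end

section
/- Let G be an abelian group, δ > 0, and f, g : G → ℂ with |f(x+y) + f(x−y) − 2·f(x)·g(y)| ≤ δ for all x, y ∈ G. If f is unbounded, then g satisfies g(x+y) + g(x−y) = 2·g(x)·g(y) for all x, y ∈ G. -/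
/-! Write `D f g x y = f (x + y) + f (x - y) - 2 f(x) g(y)`. Expanding shows
`2 f(z) D g g x y = D f g (z + x) y + D f g (z - x) y - D f g z (x + y) - D f g z (x - y)
  + 2 g(y) D f g z x`,
so a uniform bound on `D f g` bounds `|f z| |D g g x y|` uniformly in `z`; as `f` is unbounded,
`D g g x y = 0`. -/

namespace DAlembert

variable {G 𝕜 : Type*} [AddCommGroup G]

def defect [CommRing 𝕜] (f g : G → 𝕜) (x y : G) : 𝕜 :=
  f (x + y) + f (x - y) - 2 * f x * g y

theorem two_mul_mul_defect_self [CommRing 𝕜] (f g : G → 𝕜) (z x y : G) :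
    2 * f z * defect g g x y =
      defect f g (z + x) y + defect f g (z - x) y - defect f g z (x + y)
        - defect f g z (x - y) + 2 * g y * defect f g z x := by
  simp only [defect]
  rw [show z + (x + y) = z + x + y by abel, show z - (x + y) = z - x - y by abel,
    show z + (x - y) = z + x - y by abel, show z - (x - y) = z - x + y by abel]
  ring

variable [RCLike 𝕜] {f g : G → 𝕜} {δ : ℝ}

theorem norm_mul_norm_defect_self_le (h : ∀ x y, ‖defect f g x y‖ ≤ δ) (z x y : G) :
    ‖f z‖ * ‖defect g g x y‖ ≤ (2 + ‖g y‖) * δ := by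
  have key : ‖2 * f z * defect g g x y‖ ≤ δ + δ + δ + δ + 2 * ‖g y‖ * δ := by
    rw [two_mul_mul_defect_self]
    refine (norm_add_le _ _).trans (add_le_add ?_ ?_)
    · refine (norm_sub_le _ _).trans (add_le_add ((norm_sub_le _ _).trans
        (add_le_add ((norm_add_le _ _).trans (add_le_add (h _ _) (h _ _))) (h _ _))) (h _ _))
    · rw [norm_mul, norm_mul, RCLike.norm_two]
      exact mul_le_mul_of_nonneg_left (h _ _) (by positivity)
  rw [norm_mul, norm_mul, RCLike.norm_two] at key
  linarith

theorem defect_self_eq_zero_of_unbounded (h : ∀ x y, ‖defect f g x y‖ ≤ δ)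
    (hf : ∀ M : ℝ, ∃ z, M < ‖f z‖) (x y : G) : defect g g x y = 0 := by
  by_contra hne
  have hpos : 0 < ‖defect g g x y‖ := norm_pos_iff.mpr hne
  obtain ⟨z, hz⟩ := hf ((2 + ‖g y‖) * δ / ‖defect g g x y‖)
  rw [div_lt_iff₀ hpos] at hz
  exact hz.not_ge (norm_mul_norm_defect_self_le h z x y)

end DAlembert

theorem stmt_15_general (G : Type*) [AddCommGroup G] (δ : ℝ) (f g : G → ℂ)
    (h : ∀ x y : G, ‖f (x + y) + f (x - y) - 2 * f x * g y‖ ≤ δ)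
    (hf : ∀ M : ℝ, ∃ z : G, M < ‖f z‖) :
    ∀ x y : G, g (x + y) + g (x - y) = 2 * g x * g y := fun x y =>
  sub_eq_zero.mp (DAlembert.defect_self_eq_zero_of_unbounded h hf x y)

theorem stmt_15 (G : Type*) [AddCommGroup G] (δ : ℝ) (hδ : 0 < δ) (f g : G → ℂ)
    (h : ∀ x y : G, ‖f (x + y) + f (x - y) - 2 * f x * g y‖ ≤ δ)
    (hf : ∀ M : ℝ, ∃ z : G, M < ‖f z‖) :
    ∀ x y : G, g (x + y) + g (x - y) = 2 * g x * g y :=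
  stmt_15_general G δ f g h hf
end
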